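/- A function p : ℝ → ℝ satisfies both monotonicity (for all t₁, t₂, t₃ ∈ ℝ, |t₁ − t₂| > |t₁ − t₃| if and only if |p(t₁) − p(t₂)| > |p(t₁) − p(t₃)|) and translation invariance (for all t₁, t₂, l ∈ ℝ, |p(t₁ + l) − p(t₁)| = |p(t₂ + l) − p(t₂)|) if and only if there exist k, b ∈ ℝ with k ≠ 0 such that p(x) = k·x + b for all x ∈ ℝ. -/

import Mathlib

/-!
A map `f : ℝ → ℝ` that compares distances from every base point as its argument does is
injective and sends points equidistant from a base point to points equidistant from its image.
The midpoint of `a ≠ b` is equidistant from them, and in `ℝ` the only point equidistant from the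
distinct points `f a`, `f b` is their midpoint; so `f` preserves midpoints and `f - f 0` is
additive. Since `|f x - f 0| < |f (1/n) - f 0| = |f 1 - f 0| / n` for `|x| < 1/n`, this additive
map is continuous at `0`, hence `ℝ`-linear.
-/

def PreservesDistOrder {α β : Type*} [PseudoMetricSpace α] [PseudoMetricSpace β]
    (f : α → β) : Prop :=
  ∀ x y z, dist x z < dist x y ↔ dist (f x) (f z) < dist (f x) (f y)

namespace PreservesDistOrder

variable {α β : Type*} [PseudoMetricSpace β] {f : α → β}

theorem of_dist_eq_mul [PseudoMetricSpace α] {r : ℝ} (hr : 0 < r)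
    (h : ∀ x y, dist (f x) (f y) = r * dist x y) : PreservesDistOrder f := fun x y z => by
  rw [h, h, mul_lt_mul_iff_right₀ hr]

theorem sub_const {E : Type*} [PseudoMetricSpace α] [SeminormedAddCommGroup E] {f : α → E}
    (hf : PreservesDistOrder f) (c : E) : PreservesDistOrder (fun x => f x - c) := by
  simpa only [PreservesDistOrder, dist_sub_right] using hf

theorem dist_eq_dist [PseudoMetricSpace α] (hf : PreservesDistOrder f) {x y z : α}
    (h : dist x y = dist x z) : dist (f x) (f y) = dist (f x) (f z) :=
  le_antisymm (not_lt.1 fun hlt => ((hf x y z).2 hlt).ne' h)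
    (not_lt.1 fun hlt => ((hf x z y).2 hlt).ne h)

theorem injective [MetricSpace α] (hf : PreservesDistOrder f) : Function.Injective f := by
  intro x y hxy
  by_contra hne
  have := (hf x y x).1 (by simpa using hne)
  simp [hxy] at this

end PreservesDistOrder

theorem preservesDistOrder_mul_add {k : ℝ} (hk : k ≠ 0) (b : ℝ) :
    PreservesDistOrder fun x : ℝ => k * x + b :=
  .of_dist_eq_mul (abs_pos.2 hk) fun x y => by
    rw [Real.dist_eq, Real.dist_eq, ← abs_mul]
    ring_nf

theorem Real.eq_midpoint_of_dist_eq {a b m : ℝ} (hab : a ≠ b) (h : dist m a = dist m b) :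
    m = midpoint ℝ a b := by
  rw [Real.dist_eq, Real.dist_eq, abs_eq_abs] at h
  rw [midpoint_eq_smul_add, smul_eq_mul, invOf_eq_inv]
  rcases h with h | h
  · exact absurd (by linarith) hab
  · linarith

namespace PreservesDistOrder

variable {f : ℝ → ℝ}

theorem map_midpoint (hf : PreservesDistOrder f) (a b : ℝ) :
    f (midpoint ℝ a b) = midpoint ℝ (f a) (f b) := by
  rcases eq_or_ne a b with rfl | hab
  · simp
  refine Real.eq_midpoint_of_dist_eq (hf.injective.ne hab) (hf.dist_eq_dist ?_)
  rw [dist_comm, dist_left_midpoint_eq_dist_right_midpoint, dist_comm]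

theorem continuous_addMonoidHom (q : ℝ →+ ℝ) (hq : PreservesDistOrder q) : Continuous q := by
  refine continuous_of_continuousAt_zero q (Metric.continuousAt_iff.2 fun ε hε => ?_)
  obtain ⟨n, hn⟩ := exists_nat_gt (|q 1| / ε)
  have hn₀ : (0 : ℝ) < n := lt_of_le_of_lt (by positivity) hn
  refine ⟨(n : ℝ)⁻¹, by positivity, fun x hx => ?_⟩
  have hq_inv : q (n : ℝ)⁻¹ = q 1 / n := by
    simpa [div_eq_inv_mul] using map_inv_natCast_smul q ℝ ℝ n 1
  calc dist (q x) (q 0) = dist (q 0) (q x) := dist_comm _ _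
    _ < dist (q 0) (q (n : ℝ)⁻¹) := (hq 0 _ x).1 (by simpa [dist_comm, abs_of_pos hn₀] using hx)
    _ = |q 1| / n := by simp [hq_inv]
    _ < ε := (div_lt_iff₀ hn₀).2 (by rwa [div_lt_iff₀ hε, mul_comm] at hn)

theorem exists_affine (hf : PreservesDistOrder f) : ∃ k b : ℝ, k ≠ 0 ∧ ∀ x, f x = k * x + b := by
  have hf₀ := hf.sub_const (f 0)
  let q := AddMonoidHom.ofMapMidpoint ℝ ℝ (fun x => f x - f 0) (sub_self _) hf₀.map_midpoint
  have hq_smul := map_real_smul q (continuous_addMonoidHom q hf₀)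
  refine ⟨q 1, f 0, (map_ne_zero_iff q hf₀.injective).2 one_ne_zero, fun x => ?_⟩
  have hx : q x = x * q 1 := by simpa using hq_smul x 1
  change f x - f 0 = _ at hx
  linarith

end PreservesDistOrder

theorem monotone_translation_invariant_iff_linear
    (p : ℝ → ℝ) :
    ((∀ t₁ t₂ t₃ : ℝ, |t₁ - t₂| > |t₁ - t₃| ↔ |p t₁ - p t₂| > |p t₁ - p t₃|) ∧
      (∀ t₁ t₂ l : ℝ, |p (t₁ + l) - p t₁| = |p (t₂ + l) - p t₂|)) ↔
    (∃ k b : ℝ, k ≠ 0 ∧ ∀ x : ℝ, p x = k * x + b) := by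
  constructor
  · rintro ⟨h_order, -⟩
    exact PreservesDistOrder.exists_affine (f := p) h_order
  · rintro ⟨k, b, hk, hp⟩
    obtain rfl : p = fun x => k * x + b := funext hp
    exact ⟨preservesDistOrder_mul_add hk b, fun t₁ t₂ l => by ring_nf⟩
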